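/- Let X be a Hilbert space, Ψ : X → (−∞,∞] and Ψ_n : X → (−∞,∞] (n ∈ ℕ) proper l.s.c. convex functions such that Ψ_n → Ψ in the sense of Mosco. Suppose [z_n, z_n*] ∈ ∂Ψ_n for each n, z_n → z strongly in X, and z_n* → z* weakly in X. Then [z, z*] ∈ ∂Ψ and Ψ_n(z_n) → Ψ(z) as n → ∞. -/

import Mathlib

/-!
Testing the subgradient inequality of `Ψₙ` at `zₙ` against a recovery sequence `wₙ → v` gives
`limsup Ψₙ(zₙ) ≤ ⟪z*, v - z⟫ + Ψ(v)`: the pairing `⟪zₙ*, wₙ - zₙ⟫` converges to `⟪z*, v - z⟫`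
because the weakly convergent `zₙ*` are bounded (Banach–Steinhaus). Together with the liminf
inequality `Ψ(z) ≤ liminf Ψₙ(zₙ)` this is the subgradient inequality for `Ψ` at `z`, and the
choice `v = z` squeezes `Ψₙ(zₙ)` to `Ψ(z)`.
-/

open Filter Topology

section WeakConvergence

variable {𝕜 X : Type*} [RCLike 𝕜] [NormedAddCommGroup X] [InnerProductSpace 𝕜 X]

theorem exists_norm_le_of_tendsto_inner [CompleteSpace X] {x : ℕ → X} {y : X}
    (hx : ∀ v, Tendsto (fun n => inner 𝕜 (x n) v) atTop (𝓝 (inner 𝕜 y v))) :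
    ∃ M, ∀ n, ‖x n‖ ≤ M := by
  obtain ⟨M, hM⟩ := banach_steinhaus (g := fun n => innerSL 𝕜 (x n)) fun v => by
    obtain ⟨C, hC⟩ := (hx v).norm.bddAbove_range
    exact ⟨C, fun n => hC (Set.mem_range_self n)⟩
  exact ⟨M, fun n => by simpa [innerSL_apply_norm] using hM n⟩

theorem tendsto_inner_of_tendsto_inner_of_tendsto [CompleteSpace X] {x u : ℕ → X} {y w : X}
    (hx : ∀ v, Tendsto (fun n => inner 𝕜 (x n) v) atTop (𝓝 (inner 𝕜 y v)))
    (hu : Tendsto u atTop (𝓝 w)) :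
    Tendsto (fun n => inner 𝕜 (x n) (u n)) atTop (𝓝 (inner 𝕜 y w)) := by
  obtain ⟨M, hM⟩ := exists_norm_le_of_tendsto_inner hx
  have hsmall : Tendsto (fun n => inner 𝕜 (x n) (u n - w)) atTop (𝓝 0) := by
    refine squeeze_zero_norm (fun n => (norm_inner_le_norm _ _).trans
      (mul_le_mul_of_nonneg_right (hM n) (norm_nonneg _))) ?_
    simpa using (tendsto_iff_norm_sub_tendsto_zero.mp hu).const_mul M
  simpa [inner_sub_right] using (hx w).add hsmall

end WeakConvergence

theorem EReal.limsup_le_add_of_le_coe_add {α : Type*} {l : Filter α} [l.NeBot]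
    {f g : α → EReal} {a : α → ℝ} {a₀ : ℝ} {b : EReal}
    (hle : ∀ i, f i ≤ a i + g i) (ha : Tendsto a l (𝓝 a₀)) (hg : Tendsto g l (𝓝 b)) :
    limsup f l ≤ a₀ + b := by
  have hsum : Tendsto (fun i => (a i : EReal) + g i) l (𝓝 (a₀ + b)) :=
    (EReal.continuousAt_add (by simp) (by simp)).tendsto.comp
      ((EReal.tendsto_coe.mpr ha).prodMk_nhds hg)
  exact (limsup_le_limsup (Eventually.of_forall hle)).trans hsum.limsup_eq.le

theorem limsup_le_inner_add_of_subgradient {X : Type*} [NormedAddCommGroup X]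
    [InnerProductSpace ℝ X] [CompleteSpace X] {Ψ : X → EReal} {Ψn : ℕ → X → EReal}
    (hrecovery : ∀ w : X, Ψ w ≠ ⊤ → ∃ wn : ℕ → X,
      Tendsto wn atTop (𝓝 w) ∧ Tendsto (fun n => Ψn n (wn n)) atTop (𝓝 (Ψ w)))
    {z zstar : X} {zn znstar : ℕ → X}
    (hsub : ∀ n, ∀ v : X, Ψn n (zn n) ≤ (inner ℝ (znstar n) (v - zn n) : EReal) + Ψn n v)
    (hzn : Tendsto zn atTop (𝓝 z))
    (hznstar : ∀ v : X,
      Tendsto (fun n => inner ℝ (znstar n) v) atTop (𝓝 (inner ℝ zstar v)))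
    (v : X) :
    limsup (fun n => Ψn n (zn n)) atTop ≤ (inner ℝ zstar (v - z) : EReal) + Ψ v := by
  rcases eq_or_ne (Ψ v) ⊤ with hv | hv
  · simp [hv]
  obtain ⟨wn, hwn, hΨwn⟩ := hrecovery v hv
  exact EReal.limsup_le_add_of_le_coe_add (fun n => hsub n (wn n))
    (tendsto_inner_of_tendsto_inner_of_tendsto hznstar (hwn.sub hzn)) hΨwn

theorem mosco_subdifferential_limit_general
    {X : Type*} [NormedAddCommGroup X] [InnerProductSpace ℝ X] [CompleteSpace X]
    (Ψ : X → EReal) (Ψn : ℕ → X → EReal)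
    -- Mosco convergence, part (i): weak lower-bound inequality
    (hMosco1 : ∀ (w : X) (wn : ℕ → X),
      (∀ v : X, Tendsto (fun n => (inner ℝ (wn n) v : ℝ)) atTop (nhds (inner ℝ w v))) →
        Ψ w ≤ atTop.liminf (fun n => Ψn n (wn n)))
    -- Mosco convergence, part (ii): strong recovery sequences
    (hMosco2 : ∀ w : X, Ψ w ≠ ⊤ → ∃ wn : ℕ → X,
      Tendsto wn atTop (nhds w) ∧ Tendsto (fun n => Ψn n (wn n)) atTop (nhds (Ψ w)))
    (z zstar : X) (zn znstar : ℕ → X)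
    (hsub : ∀ n, ∀ v : X,
      Ψn n (zn n) ≤ (((inner ℝ (znstar n) (v - zn n) : ℝ)) : EReal) + Ψn n v)
    (hzn : Tendsto zn atTop (nhds z))
    (hznstar : ∀ v : X,
      Tendsto (fun n => (inner ℝ (znstar n) v : ℝ)) atTop (nhds (inner ℝ zstar v))) :
    (∀ v : X, Ψ z ≤ (((inner ℝ zstar (v - z) : ℝ)) : EReal) + Ψ v) ∧
      Tendsto (fun n => Ψn n (zn n)) atTop (nhds (Ψ z)) := by
  have hlower : Ψ z ≤ liminf (fun n => Ψn n (zn n)) atTop :=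
    hMosco1 z zn fun v => hzn.inner tendsto_const_nhds
  have hupper := limsup_le_inner_add_of_subgradient hMosco2 hsub hzn hznstar
  refine ⟨fun v => (hlower.trans liminf_le_limsup).trans (hupper v), ?_⟩
  exact tendsto_of_le_liminf_of_limsup_le hlower (by simpa using hupper z)

/-- Fact (Mosco convergence and subdifferentials): if proper l.s.c. convex
functions `Ψₙ` Mosco-converge to `Ψ` on a Hilbert space `X`,
`[zₙ, zₙ*] ∈ ∂Ψₙ`, `zₙ → z` strongly, and `zₙ* ⇀ z*` weakly, then
`[z, z*] ∈ ∂Ψ` and `Ψₙ(zₙ) → Ψ(z)`. -/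
theorem mosco_subdifferential_limit
    {X : Type*} [NormedAddCommGroup X] [InnerProductSpace ℝ X] [CompleteSpace X]
    (Ψ : X → EReal) (Ψn : ℕ → X → EReal)
    (hproper : ∃ z, Ψ z ≠ ⊤) (hne_bot : ∀ z, Ψ z ≠ ⊥)
    (hproper_n : ∀ n, ∃ z, Ψn n z ≠ ⊤) (hne_bot_n : ∀ n z, Ψn n z ≠ ⊥)
    (hlsc : LowerSemicontinuous Ψ) (hlsc_n : ∀ n, LowerSemicontinuous (Ψn n))
    (hconv : ∀ x y : X, ∀ t : ℝ, 0 ≤ t → t ≤ 1 →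
      Ψ (t • x + (1 - t) • y) ≤ (t : EReal) * Ψ x + ((1 - t : ℝ) : EReal) * Ψ y)
    (hconv_n : ∀ n, ∀ x y : X, ∀ t : ℝ, 0 ≤ t → t ≤ 1 →
      Ψn n (t • x + (1 - t) • y) ≤
        (t : EReal) * Ψn n x + ((1 - t : ℝ) : EReal) * Ψn n y)
    -- Mosco convergence, part (i): weak lower-bound inequality
    (hMosco1 : ∀ (w : X) (wn : ℕ → X),
      (∀ v : X, Tendsto (fun n => (inner ℝ (wn n) v : ℝ)) atTop (nhds (inner ℝ w v))) →
        Ψ w ≤ atTop.liminf (fun n => Ψn n (wn n)))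
    -- Mosco convergence, part (ii): strong recovery sequences
    (hMosco2 : ∀ w : X, Ψ w ≠ ⊤ → ∃ wn : ℕ → X,
      Tendsto wn atTop (nhds w) ∧ Tendsto (fun n => Ψn n (wn n)) atTop (nhds (Ψ w)))
    (z zstar : X) (zn znstar : ℕ → X)
    (hsub : ∀ n, ∀ v : X,
      Ψn n (zn n) ≤ (((inner ℝ (znstar n) (v - zn n) : ℝ)) : EReal) + Ψn n v)
    (hzn : Tendsto zn atTop (nhds z))
    (hznstar : ∀ v : X,
      Tendsto (fun n => (inner ℝ (znstar n) v : ℝ)) atTop (nhds (inner ℝ zstar v))) :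
    (∀ v : X, Ψ z ≤ (((inner ℝ zstar (v - z) : ℝ)) : EReal) + Ψ v) ∧
      Tendsto (fun n => Ψn n (zn n)) atTop (nhds (Ψ z)) :=
  mosco_subdifferential_limit_general Ψ Ψn hMosco1 hMosco2 z zstar zn znstar hsub hzn hznstar
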